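/- arXiv:1408.6320 — 2 statements merged into one kernel-verified Lean document; each statement's English description precedes it below -/
import Mathlib

section
/- Let e : ℂ → ℝ be a smooth nonnegative function satisfying Δe ≥ -K·e² on ℂ for some constant K > 0 (where Δ is the Euclidean Laplacian). If for some r > 0 one has ∫_{B_r} e ≤ π/(8K), then e(0) ≤ (8/(π r²)) ∫_{B_r} e, where B_r is the Euclidean disc of radius r centered at 0. -/
set_option maxHeartbeats 1000000
open MeasureTheory Real intervalIntegral Complex

/-- differentiation under the interval integral for continuous integrand/derivative -/
lemma my_param_deriv {a b : ℝ} {F DF : ℝ → ℝ → ℝ}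
    (hF : Continuous fun p : ℝ × ℝ => F p.1 p.2)
    (hDF : Continuous fun p : ℝ × ℝ => DF p.1 p.2)
    (hd : ∀ x t, HasDerivAt (fun x => F x t) (DF x t) x) (x₀ : ℝ) :
    HasDerivAt (fun x => ∫ t in a..b, F x t) (∫ t in a..b, DF x₀ t) x₀ := by
  obtain ⟨C, hC⟩ := (isCompact_Icc (a := x₀ - 1) (b := x₀ + 1)|>.prod (isCompact_uIcc (a := a) (b := b))).exists_bound_of_continuousOn hDF.continuousOn
  refine (intervalIntegral.hasDerivAt_integral_of_dominated_loc_of_deriv_le (s := Metric.ball x₀ 1) (bound := fun _ => C)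
    (Metric.ball_mem_nhds x₀ one_pos) ?_ ?_ ?_ ?_ ?_ ?_).2
  · filter_upwards with x
    exact (hF.comp (continuous_const.prodMk continuous_id)).aestronglyMeasurable
  · exact (hF.comp (continuous_const.prodMk continuous_id)).intervalIntegrable a b
  · exact (hDF.comp (continuous_const.prodMk continuous_id)).aestronglyMeasurable
  · filter_upwards with t ht x hx
    refine hC (x, t) ⟨?_, Set.uIoc_subset_uIcc ht⟩
    have := Metric.mem_ball.1 hx
    rw [Real.dist_eq] at this
    constructor <;> [linarith [abs_le.1 this.le |>.1]; linarith [abs_le.1 this.le |>.2]]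
  · exact intervalIntegrable_const
  · filter_upwards with t
    exact fun ht x hx => hd x t


noncomputable def w1 (θ : ℝ) : ℂ := Complex.exp (θ * Complex.I)

lemma w1_abs (θ : ℝ) : ‖w1 θ‖ = 1 := Complex.norm_exp_ofReal_mul_I θ


noncomputable def Hs (u : ℂ → ℝ) : ℂ → ℂ →L[ℝ] ℂ →L[ℝ] ℝ := fderiv ℝ (fderiv ℝ u)

noncomputable def lap (u : ℂ → ℝ) (w : ℂ) : ℝ := Hs u w 1 1 + Hs u w Complex.I Complex.I

lemma contDiff_du {F : Type*} [NormedAddCommGroup F] [NormedSpace ℝ F] {u : ℂ → F}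
    (hu : ContDiff ℝ (⊤ : ℕ∞) u) : ContDiff ℝ (⊤ : ℕ∞) (fderiv ℝ u) :=
  hu.fderiv_right (by simp)

lemma hH {u : ℂ → ℝ} (hu : ContDiff ℝ (⊤ : ℕ∞) u) (w : ℂ) : HasFDerivAt (fderiv ℝ u) (Hs u w) w :=
  ((contDiff_du hu).differentiable (by simp) w).hasFDerivAt

lemma Hs_symm {u : ℂ → ℝ} (hu : ContDiff ℝ (⊤ : ℕ∞) u) (w a b : ℂ) : Hs u w a b = Hs u w b a :=
  second_derivative_symmetric (fun y => (hu.differentiable (by simp) y).hasFDerivAt) (hH hu w) a b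

lemma w1_eq (θ : ℝ) : w1 θ = Real.cos θ • (1 : ℂ) + Real.sin θ • Complex.I := by
  simp [w1, Complex.exp_mul_I, Complex.real_smul]

lemma I_w1_eq (θ : ℝ) : Complex.I * w1 θ = (-Real.sin θ) • (1 : ℂ) + Real.cos θ • Complex.I := by
  rw [w1_eq]
  simp [Complex.real_smul]
  ring_nf
  rw [Complex.I_sq]
  ring

lemma Hs_bilin (u : ℂ → ℝ) (w x y : ℂ) (α β γ δ : ℝ) :
    Hs u w (α • x + β • y) (γ • x + δ • y)
      = α*γ * Hs u w x x + α*δ * Hs u w x y + β*γ * Hs u w y x + β*δ * Hs u w y y := by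
  simp only [map_add, _root_.map_smul, ContinuousLinearMap.add_apply,
    ContinuousLinearMap.coe_smul', Pi.smul_apply, smul_eq_mul]
  ring

lemma Hs_rot {u : ℂ → ℝ} (hu : ContDiff ℝ (⊤ : ℕ∞) u) (w : ℂ) (θ : ℝ) :
    Hs u w (w1 θ) (w1 θ) + Hs u w (Complex.I * w1 θ) (Complex.I * w1 θ) = lap u w := by
  have hsymm := Hs_symm hu w Complex.I 1
  have e1 : Hs u w (w1 θ) (w1 θ)
      = Real.cos θ^2 * Hs u w 1 1 + 2*(Real.cos θ * Real.sin θ) * Hs u w 1 Complex.I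
        + Real.sin θ^2 * Hs u w Complex.I Complex.I := by
    rw [w1_eq, Hs_bilin]
    rw [hsymm]
    ring
  have e2 : Hs u w (Complex.I * w1 θ) (Complex.I * w1 θ)
      = Real.sin θ^2 * Hs u w 1 1 - 2*(Real.cos θ * Real.sin θ) * Hs u w 1 Complex.I
        + Real.cos θ^2 * Hs u w Complex.I Complex.I := by
    rw [I_w1_eq, Hs_bilin]
    rw [hsymm]
    ring
  rw [e1, e2, lap]
  linear_combination (Hs u w 1 1 + Hs u w Complex.I Complex.I) * (Real.sin_sq_add_cos_sq θ)

lemma fderiv_apply_eq {u : ℂ → ℝ} (hu : ContDiff ℝ (⊤ : ℕ∞) u) (a b z : ℂ) :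
    fderiv ℝ (fun w => fderiv ℝ u w a) z b = Hs u z b a := by
  have h := fderiv_clm_apply (𝕜 := ℝ) (c := fderiv ℝ u) (u := fun _ : ℂ => a)
    ((contDiff_du hu).differentiable (by simp) z) (differentiableAt_const a)
  simp only [fderiv_fun_const, Pi.zero_apply, ContinuousLinearMap.comp_zero, zero_add] at h
  rw [h]
  rfl

lemma w1_hasDeriv (θ : ℝ) : HasDerivAt w1 (w1 θ * Complex.I) θ := by
  have h1 : HasDerivAt (fun θ : ℝ => (θ : ℂ) * Complex.I) Complex.I θ := by
    simpa using ((hasDerivAt_id θ).ofReal_comp.mul_const Complex.I)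
  exact h1.cexp

lemma w1_cont : Continuous w1 := by
  have : Continuous fun θ : ℝ => (θ : ℂ) * Complex.I := by continuity
  exact Complex.continuous_exp.comp this


noncomputable def phif (u : ℂ → ℝ) (z : ℂ) (ρ : ℝ) : ℝ := ∫ θ in (-π)..π, u (z + ρ • w1 θ)

noncomputable def Df (u : ℂ → ℝ) (z : ℂ) (ρ : ℝ) : ℝ :=
  ∫ θ in (-π)..π, fderiv ℝ u (z + ρ • w1 θ) (w1 θ)


section Main
variable {u : ℂ → ℝ} (hu : ContDiff ℝ (⊤ : ℕ∞) u) (z : ℂ)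
include hu

omit hu in
lemma vcont : Continuous fun p : ℝ × ℝ => z + p.1 • w1 p.2 := by
  exact continuous_const.add ((continuous_fst.smul ((w1_cont).comp continuous_snd)))

omit hu in
lemma hc_rad (θ ρ : ℝ) : HasDerivAt (fun ρ : ℝ => z + ρ • w1 θ) (w1 θ) ρ := by
  simpa using ((hasDerivAt_id ρ).smul_const (w1 θ)).const_add z

lemma hrad (θ ρ : ℝ) :
    HasDerivAt (fun ρ : ℝ => u (z + ρ • w1 θ)) (fderiv ℝ u (z + ρ • w1 θ) (w1 θ)) ρ :=
  ((hu.differentiable (by simp) _).hasFDerivAt).comp_hasDerivAt ρ (hc_rad z θ ρ)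

lemma hrad2 (θ ρ : ℝ) :
    HasDerivAt (fun ρ : ℝ => fderiv ℝ u (z + ρ • w1 θ) (w1 θ))
      (Hs u (z + ρ • w1 θ) (w1 θ) (w1 θ)) ρ := by
  have h := ((hH hu (z + ρ • w1 θ)).comp_hasDerivAt ρ (hc_rad z θ ρ))
  simpa using h.clm_apply (hasDerivAt_const ρ (w1 θ))

lemma htan (ρ θ : ℝ) :
    HasDerivAt (fun θ : ℝ => fderiv ℝ u (z + ρ • w1 θ) (Complex.I * w1 θ))
      (ρ * Hs u (z + ρ • w1 θ) (Complex.I * w1 θ) (Complex.I * w1 θ)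
        - fderiv ℝ u (z + ρ • w1 θ) (w1 θ)) θ := by
  have hcθ : HasDerivAt (fun θ : ℝ => z + ρ • w1 θ) (ρ • (w1 θ * Complex.I)) θ :=
    ((w1_hasDeriv θ).const_smul ρ).const_add z
  have hclm := (hH hu (z + ρ • w1 θ)).comp_hasDerivAt θ hcθ
  have hm : HasDerivAt (fun θ : ℝ => Complex.I * w1 θ) (Complex.I * (w1 θ * Complex.I)) θ :=
    (w1_hasDeriv θ).const_mul Complex.I
  have h := hclm.clm_apply hm
  convert h using 1
  · rfl
  · rfl
  · rfl
  have e1 : Complex.I * (w1 θ * Complex.I) = -w1 θ := by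
    rw [show Complex.I * (w1 θ * Complex.I) = (Complex.I*Complex.I) * w1 θ by ring,
      Complex.I_mul_I]; ring
  rw [e1]
  rw [show ρ • (w1 θ * Complex.I) = ρ • (Complex.I * w1 θ) by ring_nf]
  rw [_root_.map_smul]
  simp only [ContinuousLinearMap.coe_smul', Pi.smul_apply, smul_eq_mul, map_neg,
    Function.comp_apply]
  ring


lemma du_cont2 : Continuous fun p : ℝ × ℝ => fderiv ℝ u (z + p.1 • w1 p.2) (w1 p.2) :=
  Continuous.clm_apply (((contDiff_du hu).continuous).comp (vcont z))
    (w1_cont.comp continuous_snd)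

lemma Hrr_cont2 : Continuous fun p : ℝ × ℝ =>
    Hs u (z + p.1 • w1 p.2) (w1 p.2) (w1 p.2) := by
  have hHc : Continuous (Hs u) := by
    unfold Hs
    exact (contDiff_du (contDiff_du hu)).continuous
  exact Continuous.clm_apply
    (Continuous.clm_apply (hHc.comp (vcont z)) (w1_cont.comp continuous_snd))
    (w1_cont.comp continuous_snd)

lemma hphi (ρ : ℝ) : HasDerivAt (phif u z) (Df u z ρ) ρ := by
  exact my_param_deriv (hu.continuous.comp (vcont z)) (du_cont2 hu z)
    (fun x t => hrad hu z t x) ρ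

lemma hD (ρ : ℝ) : HasDerivAt (Df u z)
    (∫ θ in (-π)..π, Hs u (z + ρ • w1 θ) (w1 θ) (w1 θ)) ρ := by
  exact my_param_deriv (du_cont2 hu z) (Hrr_cont2 hu z) (fun x t => hrad2 hu z t x) ρ

lemma Hii_cont2 : Continuous fun p : ℝ × ℝ =>
    Hs u (z + p.1 • w1 p.2) (Complex.I * w1 p.2) (Complex.I * w1 p.2) := by
  have hHc : Continuous (Hs u) := by
    unfold Hs
    exact (contDiff_du (contDiff_du hu)).continuous
  have hiw : Continuous fun p : ℝ × ℝ => Complex.I * w1 p.2 :=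
    continuous_const.mul (w1_cont.comp continuous_snd)
  exact Continuous.clm_apply (Continuous.clm_apply (hHc.comp (vcont z)) hiw) hiw

lemma tangential (ρ : ℝ) :
    Df u z ρ = ρ * ∫ θ in (-π)..π, Hs u (z + ρ • w1 θ) (Complex.I * w1 θ) (Complex.I * w1 θ) := by
  have hF : ∀ θ ∈ Set.uIcc (-π) π, HasDerivAt
      (fun θ : ℝ => fderiv ℝ u (z + ρ • w1 θ) (Complex.I * w1 θ))
      (ρ * Hs u (z + ρ • w1 θ) (Complex.I * w1 θ) (Complex.I * w1 θ)
        - fderiv ℝ u (z + ρ • w1 θ) (w1 θ)) θ := fun θ _ => htan hu z ρ θ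
  have hint : IntervalIntegrable (fun θ : ℝ =>
      ρ * Hs u (z + ρ • w1 θ) (Complex.I * w1 θ) (Complex.I * w1 θ)
        - fderiv ℝ u (z + ρ • w1 θ) (w1 θ)) volume (-π) π := by
    apply Continuous.intervalIntegrable
    have h1 : Continuous fun θ : ℝ =>
        Hs u (z + ρ • w1 θ) (Complex.I * w1 θ) (Complex.I * w1 θ) :=
      (Hii_cont2 hu z).comp (continuous_const.prodMk continuous_id)
    have h2 : Continuous fun θ : ℝ => fderiv ℝ u (z + ρ • w1 θ) (w1 θ) :=
      (du_cont2 hu z).comp (continuous_const.prodMk continuous_id)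
    exact (continuous_const.mul h1).sub h2
  have hftc := intervalIntegral.integral_eq_sub_of_hasDerivAt hF hint
  have hw1pi : w1 π = w1 (-π) := by
    rw [w1, w1, show ((-π : ℝ) : ℂ) * Complex.I = -(↑π * Complex.I) by push_cast; ring,
      Complex.exp_neg, Complex.exp_pi_mul_I]
    norm_num
  rw [hw1pi, sub_self] at hftc
  have h1 : IntervalIntegrable (fun θ : ℝ =>
      ρ * Hs u (z + ρ • w1 θ) (Complex.I * w1 θ) (Complex.I * w1 θ)) volume (-π) π := by
    apply Continuous.intervalIntegrable
    exact continuous_const.mul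
      ((Hii_cont2 hu z).comp (continuous_const.prodMk continuous_id))
  have h2 : IntervalIntegrable (fun θ : ℝ => fderiv ℝ u (z + ρ • w1 θ) (w1 θ))
      volume (-π) π :=
    ((du_cont2 hu z).comp (continuous_const.prodMk continuous_id)).intervalIntegrable _ _
  rw [intervalIntegral.integral_sub h1 h2, intervalIntegral.integral_const_mul] at hftc
  unfold Df
  linarith [hftc]

noncomputable def Lf (u : ℂ → ℝ) (z : ℂ) (ρ : ℝ) : ℝ := ∫ θ in (-π)..π, lap u (z + ρ • w1 θ)

lemma hpsi (ρ : ℝ) : HasDerivAt (fun t : ℝ => t * Df u z t) (ρ * Lf u z ρ) ρ := by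
  have h := (hasDerivAt_id ρ).mul (hD hu z ρ)
  have h1 : IntervalIntegrable (fun θ : ℝ =>
      Hs u (z + ρ • w1 θ) (Complex.I * w1 θ) (Complex.I * w1 θ)) volume (-π) π :=
    ((Hii_cont2 hu z).comp (continuous_const.prodMk continuous_id)).intervalIntegrable _ _
  have h2 : IntervalIntegrable (fun θ : ℝ =>
      Hs u (z + ρ • w1 θ) (w1 θ) (w1 θ)) volume (-π) π :=
    ((Hrr_cont2 hu z).comp (continuous_const.prodMk continuous_id)).intervalIntegrable _ _
  have key : Lf u z ρ = (∫ θ in (-π)..π,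
        Hs u (z + ρ • w1 θ) (Complex.I * w1 θ) (Complex.I * w1 θ))
      + ∫ θ in (-π)..π, Hs u (z + ρ • w1 θ) (w1 θ) (w1 θ) := by
    rw [← intervalIntegral.integral_add h1 h2]
    unfold Lf
    apply intervalIntegral.integral_congr
    intro θ _
    show lap u (z + ρ • w1 θ) = _
    rw [← Hs_rot hu (z + ρ • w1 θ) θ]
    ring
  convert h using 1
  · rfl
  · rfl
  · rfl
  rw [key, tangential hu z ρ]
  simp only [id_eq]
  ring

end Main

lemma polar_int {u : ℂ → ℝ} (hu : Continuous u) (z : ℂ) {s : ℝ} (hs : 0 < s) :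
    ∫ w in Metric.ball z s, u w = ∫ t in (0:ℝ)..s, t * phif u z t := by
  classical
  set g : ℂ → ℝ := (Metric.ball (0:ℂ) s).indicator (fun x => u (z + x)) with hg
  have hpt : ∀ x : ℂ, g x = (Metric.ball z s).indicator u (z + x) := by
    intro x
    rw [hg]
    by_cases h : x ∈ Metric.ball (0:ℂ) s
    · rw [Set.indicator_of_mem h, Set.indicator_of_mem]
      simpa [Metric.mem_ball, dist_eq_norm] using h
    · rw [Set.indicator_of_notMem h, Set.indicator_of_notMem]
      intro hmem
      apply h
      simpa [Metric.mem_ball, dist_eq_norm] using hmem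
  have step1 : ∫ w in Metric.ball z s, u w = ∫ x, g x := by
    rw [← MeasureTheory.integral_indicator Metric.isOpen_ball.measurableSet,
      ← MeasureTheory.integral_add_left_eq_self ((Metric.ball z s).indicator u) z]
    exact integral_congr_ae (Filter.Eventually.of_forall fun x => (hpt x).symm)
  have step2 : ∫ x, g x
      = ∫ p in polarCoord.target, p.1 • g (Complex.polarCoord.symm p) :=
    (Complex.integral_comp_polarCoord_symm g).symm
  set S : Set (ℝ × ℝ) := Set.Ioo (0:ℝ) s ×ˢ Set.Ioo (-π) π with hS
  have hSmeas : MeasurableSet S := measurableSet_Ioo.prod measurableSet_Ioo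
  have symm_eq : ∀ p : ℝ × ℝ, Complex.polarCoord.symm p = p.1 • w1 p.2 := by
    intro p
    rw [Complex.polarCoord_symm_apply, w1_eq]
    simp [Complex.real_smul]
    ring
  have hmem_ball : ∀ p : ℝ × ℝ, 0 < p.1 →
      (p.1 • w1 p.2 ∈ Metric.ball (0:ℂ) s ↔ p.1 < s) := by
    intro p hp
    rw [Metric.mem_ball, dist_zero_right, norm_smul, Real.norm_eq_abs,
      w1_abs, mul_one, abs_of_pos hp]
  have step3 : ∫ p in polarCoord.target, p.1 • g (Complex.polarCoord.symm p)
      = ∫ p in polarCoord.target,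
          S.indicator (fun p : ℝ × ℝ => p.1 * u (z + p.1 • w1 p.2)) p := by
    apply setIntegral_congr_fun polarCoord.open_target.measurableSet
    intro p hp
    rw [polarCoord_target] at hp
    obtain ⟨hp1, hp2⟩ := hp
    simp only []
    rw [symm_eq p, hg]
    by_cases hmem : p.1 < s
    · rw [Set.indicator_of_mem ((hmem_ball p hp1).2 hmem),
        Set.indicator_of_mem (show p ∈ S from ⟨⟨hp1, hmem⟩, hp2⟩)]
      simp [smul_eq_mul]
    · rw [Set.indicator_of_notMem, Set.indicator_of_notMem]
      · simp
      · exact fun hmem2 => hmem hmem2.1.2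
      · exact fun hc => hmem ((hmem_ball p hp1).1 hc)
  have hST : S ⊆ polarCoord.target := by
    rw [polarCoord_target]
    exact Set.prod_mono (Set.Ioo_subset_Ioi_self) le_rfl
  have step4 : ∫ p in polarCoord.target,
        S.indicator (fun p : ℝ × ℝ => p.1 * u (z + p.1 • w1 p.2)) p
      = ∫ p in S, p.1 * u (z + p.1 • w1 p.2) := by
    rw [MeasureTheory.setIntegral_indicator hSmeas]
    congr 1
    rw [Set.inter_eq_right.2 hST]
  have hint : IntegrableOn (fun p : ℝ × ℝ => p.1 * u (z + p.1 • w1 p.2)) S := by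
    have hcont : Continuous fun p : ℝ × ℝ => p.1 * u (z + p.1 • w1 p.2) :=
      continuous_fst.mul (hu.comp (vcont z))
    have := hcont.continuousOn.integrableOn_compact (μ := volume)
      ((isCompact_Icc (a := (0:ℝ)) (b := s)).prod (isCompact_Icc (a := -π) (b := π)))
    exact this.mono_set (Set.prod_mono Set.Ioo_subset_Icc_self Set.Ioo_subset_Icc_self)
  have step5 : ∫ p in S, p.1 * u (z + p.1 • w1 p.2)
      = ∫ t in Set.Ioo (0:ℝ) s, ∫ θ in Set.Ioo (-π) π, t * u (z + t • w1 θ) := by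
    exact MeasureTheory.setIntegral_prod _ hint
  have step6 : ∀ t : ℝ, (∫ θ in Set.Ioo (-π) π, t * u (z + t • w1 θ)) = t * phif u z t := by
    intro t
    rw [← MeasureTheory.integral_Ioc_eq_integral_Ioo, phif,
      ← intervalIntegral.integral_of_le (by linarith [Real.pi_pos] : -π ≤ π),
      ← intervalIntegral.integral_const_mul]
  have step7 : (∫ t in Set.Ioo (0:ℝ) s, ∫ θ in Set.Ioo (-π) π, t * u (z + t • w1 θ))
      = ∫ t in (0:ℝ)..s, t * phif u z t := by
    rw [← MeasureTheory.integral_Ioc_eq_integral_Ioo,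
      ← intervalIntegral.integral_of_le hs.le]
    exact intervalIntegral.integral_congr fun t _ => step6 t
  rw [step1, step2, step3, step4, step5, step7]
lemma mono_aux {f f' : ℝ → ℝ} {a c : ℝ} (hac : a ≤ c)
    (hd : ∀ x, HasDerivAt f (f' x) x) (h' : ∀ x ∈ Set.Ioo a c, 0 ≤ f' x) :
    ∀ x ∈ Set.Icc a c, f a ≤ f x := by
  have hmono : MonotoneOn f (Set.Icc a c) := by
    apply monotoneOn_of_deriv_nonneg (convex_Icc a c)
    · exact (Differentiable.continuous fun x => (hd x).differentiableAt).continuousOn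
    · intro x hx
      exact ((hd x).differentiableAt).differentiableWithinAt
    · intro x hx
      rw [interior_Icc] at hx
      rw [(hd x).deriv]
      exact h' x hx
  intro x hx
  exact hmono ⟨le_rfl, hac⟩ hx hx.1

lemma lap_cont {u : ℂ → ℝ} (hu : ContDiff ℝ (⊤ : ℕ∞) u) : Continuous (lap u) := by
  have hHc : Continuous (Hs u) := by
    unfold Hs
    exact (contDiff_du (contDiff_du hu)).continuous
  exact Continuous.add
    (Continuous.clm_apply (Continuous.clm_apply hHc continuous_const) continuous_const)
    (Continuous.clm_apply (Continuous.clm_apply hHc continuous_const) continuous_const)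

lemma meanValue {u : ℂ → ℝ} (hu : ContDiff ℝ (⊤ : ℕ∞) u) (z : ℂ) {s η b A : ℝ}
    (hs : 0 < s) (hη : 0 < η) (hηs : η ≤ s) (hb : 0 ≤ b) (hA0 : 0 ≤ A)
    (hA : ∀ w ∈ Metric.closedBall z s, u w ≤ A)
    (hA2 : ∀ w ∈ Metric.closedBall z η, u w ≤ A / 2)
    (hlap : ∀ w ∈ Metric.closedBall z s, -(b * u w) ≤ lap u w) :
    π * s^2 * u z - π*A*b/8 * s^4 + π*A*b/16 * η^2 * s^2 ≤ ∫ w in Metric.ball z s, u w := by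
  have hπ := Real.pi_pos
  set P : ℝ := π * A * b with hP
  have hP0 : 0 ≤ P := by positivity
  set φ : ℝ → ℝ := phif u z with hφdef
  set D : ℝ → ℝ := Df u z with hDdef
  have hφd : ∀ ρ, HasDerivAt φ (D ρ) ρ := hphi hu z
  have hφcont : Continuous φ := Differentiable.continuous fun x => (hφd x).differentiableAt
  have hmemS : ∀ (ρ θ : ℝ), 0 ≤ ρ → ρ ≤ s → z + ρ • w1 θ ∈ Metric.closedBall z s := by
    intro ρ θ h0 h1
    rw [Metric.mem_closedBall, dist_eq_norm, add_sub_cancel_left, norm_smul, Real.norm_eq_abs,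
      w1_abs, mul_one, _root_.abs_of_nonneg h0]
    exact h1
  have hmemη : ∀ (ρ θ : ℝ), 0 ≤ ρ → ρ ≤ η → z + ρ • w1 θ ∈ Metric.closedBall z η := by
    intro ρ θ h0 h1
    rw [Metric.mem_closedBall, dist_eq_norm, add_sub_cancel_left, norm_smul, Real.norm_eq_abs,
      w1_abs, mul_one, _root_.abs_of_nonneg h0]
    exact h1
  have hθle : -π ≤ π := by linarith
  have hucont : ∀ ρ : ℝ, IntervalIntegrable (fun θ => u (z + ρ • w1 θ)) volume (-π) π :=
    fun ρ => ((hu.continuous.comp (vcont z)).comp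
      (continuous_const.prodMk continuous_id)).intervalIntegrable _ _
  -- φ bounds
  have hφle : ∀ ρ ∈ Set.Icc (0:ℝ) s, φ ρ ≤ 2 * π * A := by
    intro ρ hρ
    have := intervalIntegral.integral_mono_on hθle (hucont ρ) intervalIntegrable_const
      (g := fun _ => A) (fun θ _ => hA _ (hmemS ρ θ hρ.1 hρ.2))
    rw [intervalIntegral.integral_const] at this
    calc φ ρ ≤ (π - (-π)) • A := this
      _ = 2 * π * A := by rw [smul_eq_mul]; ring
  have hφleη : ∀ ρ ∈ Set.Icc (0:ℝ) η, φ ρ ≤ π * A := by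
    intro ρ hρ
    have := intervalIntegral.integral_mono_on hθle (hucont ρ) intervalIntegrable_const
      (g := fun _ => A/2) (fun θ _ => hA2 _ (hmemη ρ θ hρ.1 hρ.2))
    rw [intervalIntegral.integral_const] at this
    calc φ ρ ≤ (π - (-π)) • (A/2) := this
      _ = π * A := by rw [smul_eq_mul]; ring
  -- Laplacian integral bounds
  have hlapint : ∀ ρ : ℝ, IntervalIntegrable (fun θ => lap u (z + ρ • w1 θ)) volume (-π) π :=
    fun ρ => (((lap_cont hu).comp (vcont z)).comp
      (continuous_const.prodMk continuous_id)).intervalIntegrable _ _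
  have hLlow : ∀ ρ ∈ Set.Icc (0:ℝ) s, -(b * φ ρ) ≤ Lf u z ρ := by
    intro ρ hρ
    have hmono := intervalIntegral.integral_mono_on hθle
      (((hucont ρ).const_mul b).neg) (hlapint ρ)
      (fun θ _ => hlap _ (hmemS ρ θ hρ.1 hρ.2))
    calc -(b * φ ρ) = ∫ θ in (-π)..π, -(b * u (z + ρ • w1 θ)) := by
          rw [intervalIntegral.integral_neg, intervalIntegral.integral_const_mul]
          simp [hφdef, phif]
      _ ≤ Lf u z ρ := hmono
  have hLlow2 : ∀ ρ ∈ Set.Icc (0:ℝ) s, -(2*π*A*b) ≤ Lf u z ρ := by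
    intro ρ hρ
    have h1 := hLlow ρ hρ
    have h2 := hφle ρ hρ
    nlinarith
  have hLlow3 : ∀ ρ ∈ Set.Icc (0:ℝ) η, -(π*A*b) ≤ Lf u z ρ := by
    intro ρ hρ
    have h1 := hLlow ρ ⟨hρ.1, hρ.2.trans hηs⟩
    have h2 := hφleη ρ hρ
    nlinarith
  -- ψ lower bounds via monotonicity
  have hg1d : ∀ t : ℝ, HasDerivAt (fun t => t * D t + P/2 * t^2) (t * Lf u z t + P * t) t := by
    intro t
    have h := (hpsi hu z t).add ((hasDerivAt_pow 2 t).const_mul (P/2))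
    convert h using 1
    · rfl
    · rfl
    · rfl
    simp
    ring
  have hψlow1 : ∀ t ∈ Set.Icc (0:ℝ) η, -(P/2 * t^2) ≤ t * D t := by
    have := mono_aux hη.le hg1d (fun x hx => by
      have := hLlow3 x ⟨hx.1.le, hx.2.le⟩
      have hx0 : 0 ≤ x := hx.1.le
      nlinarith)
    intro t ht
    have h0 := this t ht
    simp only [zero_mul, ne_eq, OfNat.ofNat_ne_zero, not_false_eq_true, zero_pow, mul_zero,
      add_zero, zero_add] at h0
    nlinarith [h0]
  have hg2d : ∀ t : ℝ, HasDerivAt (fun t => t * D t + P * t^2) (t * Lf u z t + 2 * P * t) t := by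
    intro t
    have h := (hpsi hu z t).add ((hasDerivAt_pow 2 t).const_mul P)
    convert h using 1
    · rfl
    · rfl
    · rfl
    simp
    ring
  have hψlow2 : ∀ t ∈ Set.Icc η s, P/2 * η^2 - P * t^2 ≤ t * D t := by
    have hmono : MonotoneOn (fun t => t * D t + P * t^2) (Set.Icc η s) := by
      apply monotoneOn_of_deriv_nonneg (convex_Icc η s)
      · exact (Differentiable.continuous fun x => (hg2d x).differentiableAt).continuousOn
      · exact fun x hx => ((hg2d x).differentiableAt).differentiableWithinAt
      · intro x hx
        rw [interior_Icc] at hx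
        rw [(hg2d x).deriv]
        have := hLlow2 x ⟨(hη.trans hx.1).le, hx.2.le⟩
        have hx0 : (0:ℝ) < x := hη.trans hx.1
        nlinarith
    intro t ht
    have h0 := hmono (Set.left_mem_Icc.2 hηs) ht ht.1
    have h1 := hψlow1 η (Set.right_mem_Icc.2 hη.le)
    simp only at h0
    nlinarith
  -- D lower bounds
  have hDlow1 : ∀ t ∈ Set.Ioo (0:ℝ) η, 0 ≤ D t + P/2 * t := by
    intro t ht
    have h := hψlow1 t ⟨ht.1.le, ht.2.le⟩
    have ht0 : (0:ℝ) < t := ht.1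
    have : t * 0 ≤ t * (D t + P/2 * t) := by nlinarith
    exact le_of_mul_le_mul_left (by simpa using this) ht0
  have hDlow2 : ∀ t ∈ Set.Ioo η s, 0 ≤ D t + P * t := by
    intro t ht
    have h := hψlow2 t ⟨ht.1.le, ht.2.le⟩
    have ht0 : (0:ℝ) < t := hη.trans ht.1
    have : t * 0 ≤ t * (D t + P * t) := by nlinarith
    exact le_of_mul_le_mul_left (by simpa using this) ht0
  -- φ lower bounds
  have hg3d : ∀ t : ℝ, HasDerivAt (fun t => φ t + P/4 * t^2) (D t + P/2 * t) t := by
    intro t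
    have h := (hφd t).add ((hasDerivAt_pow 2 t).const_mul (P/4))
    convert h using 1
    · rfl
    · rfl
    · rfl
    simp
    ring
  have hφlow1 : ∀ t ∈ Set.Icc (0:ℝ) η, φ 0 - P/4 * t^2 ≤ φ t := by
    have := mono_aux hη.le hg3d hDlow1
    intro t ht
    have h0 := this t ht
    simp only [ne_eq, OfNat.ofNat_ne_zero, not_false_eq_true, zero_pow, mul_zero, add_zero] at h0
    linarith
  have hg4d : ∀ t : ℝ, HasDerivAt (fun t => φ t + P/2 * t^2) (D t + P * t) t := by
    intro t
    have h := (hφd t).add ((hasDerivAt_pow 2 t).const_mul (P/2))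
    convert h using 1
    · rfl
    · rfl
    · rfl
    simp
    ring
  have hφlow2 : ∀ t ∈ Set.Icc η s, φ 0 + P/4 * η^2 - P/2 * t^2 ≤ φ t := by
    have hmono : MonotoneOn (fun t => φ t + P/2 * t^2) (Set.Icc η s) := by
      apply monotoneOn_of_deriv_nonneg (convex_Icc η s)
      · exact (Differentiable.continuous fun x => (hg4d x).differentiableAt).continuousOn
      · exact fun x hx => ((hg4d x).differentiableAt).differentiableWithinAt
      · intro x hx
        rw [interior_Icc] at hx
        rw [(hg4d x).deriv]
        exact hDlow2 x hx
    intro t ht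
    have h0 := hmono (Set.left_mem_Icc.2 hηs) ht ht.1
    have h1 := hφlow1 η (Set.right_mem_Icc.2 hη.le)
    simp only at h0
    nlinarith
  -- integral bounds
  have htφint : ∀ a c : ℝ, IntervalIntegrable (fun t => t * φ t) volume a c :=
    fun a c => (continuous_id.mul hφcont).intervalIntegrable a c
  have hpoly : ∀ (c d a e : ℝ), (∫ t in a..e, (c * t - d * t^3))
      = c * (e^2 - a^2)/2 - d * (e^4 - a^4)/4 := by
    intro c d a e
    have h1i : IntervalIntegrable (fun t : ℝ => c * t) volume a e :=
      (continuous_const.mul continuous_id :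
        Continuous fun t : ℝ => c * t).intervalIntegrable a e
    have h2i : IntervalIntegrable (fun t : ℝ => d * t^3) volume a e :=
      (continuous_const.mul (continuous_pow 3) :
        Continuous fun t : ℝ => d * t^3).intervalIntegrable a e
    rw [intervalIntegral.integral_sub h1i h2i, intervalIntegral.integral_const_mul,
      intervalIntegral.integral_const_mul, integral_id, integral_pow]
    norm_num
    ring
  have hJ1 : φ 0 * (η^2 - 0^2)/2 - P/4 * (η^4 - 0^4)/4 ≤ ∫ t in (0:ℝ)..η, t * φ t := by
    rw [← hpoly (φ 0) (P/4) 0 η]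
    apply intervalIntegral.integral_mono_on hη.le _ (htφint 0 η)
    · intro t ht
      have := hφlow1 t ht
      nlinarith [ht.1]
    · exact ((continuous_const.mul continuous_id).sub
        (continuous_const.mul (continuous_pow 3))).intervalIntegrable 0 η
  have hJ2 : (φ 0 + P/4 * η^2) * (s^2 - η^2)/2 - P/2 * (s^4 - η^4)/4
      ≤ ∫ t in η..s, t * φ t := by
    rw [← hpoly (φ 0 + P/4 * η^2) (P/2) η s]
    apply intervalIntegral.integral_mono_on hηs _ (htφint η s)
    · intro t ht
      have := hφlow2 t ht
      have ht0 : 0 ≤ t := hη.le.trans ht.1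
      nlinarith
    · exact ((continuous_const.mul continuous_id).sub
        (continuous_const.mul (continuous_pow 3))).intervalIntegrable η s
  have hsplit : (∫ t in (0:ℝ)..η, t * φ t) + ∫ t in η..s, t * φ t = ∫ t in (0:ℝ)..s, t * φ t :=
    intervalIntegral.integral_add_adjacent_intervals (htφint 0 η) (htφint η s)
  have hφ0 : φ 0 = 2 * π * u z := by
    rw [hφdef]
    unfold phif
    simp only [zero_smul, add_zero]
    rw [intervalIntegral.integral_const, smul_eq_mul]
    ring
  rw [polar_int hu.continuous z hs]
  rw [← hsplit]
  have hη4 : η^4 ≤ η^2 * s^2 := by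
    have h2 : η^2 ≤ s^2 := by nlinarith
    nlinarith [mul_le_mul_of_nonneg_left h2 (sq_nonneg η)]
  calc π * s^2 * u z - π*A*b/8 * s^4 + π*A*b/16 * η^2 * s^2
      ≤ (φ 0 * (η^2 - 0^2)/2 - P/4 * (η^4 - 0^4)/4)
        + ((φ 0 + P/4 * η^2) * (s^2 - η^2)/2 - P/2 * (s^4 - η^4)/4) := by
        rw [hφ0, ← hP]
        nlinarith [mul_nonneg hP0 (sub_nonneg.2 hη4)]
    _ ≤ (∫ t in (0:ℝ)..η, t * φ t) + ∫ t in η..s, t * φ t := add_le_add hJ1 hJ2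

lemma lap_ge {e : ℂ → ℝ} {K : ℝ} (hsmooth : ContDiff ℝ (⊤ : ℕ∞) e)
    (hineq : ∀ z : ℂ,
      fderiv ℝ (fun w => fderiv ℝ e w 1) z 1
        + fderiv ℝ (fun w => fderiv ℝ e w Complex.I) z Complex.I
        ≥ -K * (e z) ^ 2) :
    ∀ w : ℂ, -(K * e w^2) ≤ lap e w := by
  intro w
  have h := hineq w
  rw [fderiv_apply_eq hsmooth 1 1 w, fderiv_apply_eq hsmooth Complex.I Complex.I w] at h
  rw [lap]
  linarith

/-- ε-regularity: if `e : ℂ → ℝ` is smooth, nonnegative, satisfies `Δe ≥ -K e²`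
(Euclidean Laplacian, expressed via second derivatives along `1` and `I`), and
`∫_{B_r} e ≤ π/(8K)`, then `e 0 ≤ (8/(π r²)) ∫_{B_r} e`. -/
theorem stmt5 (e : ℂ → ℝ) (K : ℝ) (hK : 0 < K)
    (hsmooth : ContDiff ℝ (⊤ : ℕ∞) e) (hnonneg : ∀ z, 0 ≤ e z)
    (hineq : ∀ z : ℂ,
      fderiv ℝ (fun w => fderiv ℝ e w 1) z 1
        + fderiv ℝ (fun w => fderiv ℝ e w Complex.I) z Complex.I
        ≥ -K * (e z) ^ 2)
    (r : ℝ) (hr : 0 < r)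
    (hsmall : ∫ z in Metric.ball (0:ℂ) r, e z ≤ π / (8 * K)) :
    e 0 ≤ 8 / (π * r ^ 2) * ∫ z in Metric.ball (0:ℂ) r, e z := by
  have hπ := Real.pi_pos
  set M : ℝ := ∫ z in Metric.ball (0:ℂ) r, e z with hM
  have hM0 : 0 ≤ M := setIntegral_nonneg Metric.isOpen_ball.measurableSet fun x _ => hnonneg x
  have hlapKe : ∀ w : ℂ, -(K * e w^2) ≤ lap e w := lap_ge hsmooth hineq
  have hint : IntegrableOn e (Metric.ball (0:ℂ) r) := by
    have := hsmooth.continuous.continuousOn.integrableOn_compact (μ := volume)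
      (isCompact_closedBall (0:ℂ) r)
    exact this.mono_set Metric.ball_subset_closedBall
  -- maximize f
  set f : ℂ → ℝ := fun w => (r - ‖w‖)^2 * e w with hf
  have hfcont : ContinuousOn f (Metric.closedBall (0:ℂ) r) :=
    (((continuous_const.sub continuous_norm).pow 2).mul hsmooth.continuous).continuousOn
  obtain ⟨zs, hzs, hmax⟩ := (isCompact_closedBall (0:ℂ) r).exists_isMaxOn
    ⟨0, Metric.mem_closedBall_self hr.le⟩ hfcont
  have hzsr : ‖zs‖ ≤ r := by
    simpa [Metric.mem_closedBall, Complex.dist_eq] using hzs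
  have hf0 : f 0 = r^2 * e 0 := by simp [hf]
  have hf0le : r^2 * e 0 ≤ f zs := by
    rw [← hf0]
    exact hmax (Metric.mem_closedBall_self hr.le)
  by_cases hfz : f zs ≤ 0
  · -- trivial case
    have h1 : e 0 ≤ 0 := by
      by_contra hpos
      push_neg at hpos
      have : (0:ℝ) < r^2 * e 0 := by positivity
      linarith
    have h2 : 0 ≤ 8 / (π * r ^ 2) * M := by positivity
    linarith
  push_neg at hfz
  set c : ℝ := e zs with hc
  set d : ℝ := r - ‖zs‖ with hd
  have hfz' : 0 < d^2 * c := hfz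
  have hc0 : 0 < c := by
    rcases lt_or_ge 0 c with h | h
    · exact h
    · exfalso; nlinarith [sq_nonneg d]
  have hd0 : 0 < d := by
    have hd0' : 0 ≤ d := by rw [hd]; linarith
    rcases hd0'.lt_or_eq with h | h
    · exact h
    · exfalso
      rw [← h] at hfz'
      simp at hfz' 
  set δ : ℝ := d / 2 with hδ
  have hδ0 : 0 < δ := by positivity
  have hfzs : f zs = d^2 * c := rfl
  -- points of closedBall zs δ are in ball 0 r, with r - |w| ≥ δ
  have habs : ∀ w ∈ Metric.closedBall zs δ, ‖w‖ ≤ r - δ := by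
    intro w hw
    have h1 : ‖w - zs‖ ≤ δ := by
      simpa [Metric.mem_closedBall, Complex.dist_eq] using hw
    have h2 : ‖w‖ ≤ ‖zs‖ + ‖w - zs‖ := by
      simpa using norm_add_le zs (w - zs)
    have : ‖w‖ ≤ ‖zs‖ + δ := by linarith
    rw [hd] at *
    linarith [hδ]
  have hsub : Metric.closedBall zs δ ⊆ Metric.closedBall (0:ℂ) r := by
    intro w hw
    have := habs w hw
    simp only [Metric.mem_closedBall, Complex.dist_eq, sub_zero]
    linarith
  have hsup : ∀ w ∈ Metric.closedBall zs δ, e w ≤ 4 * c := by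
    intro w hw
    have h1 := habs w hw
    have h2 : f w ≤ f zs := hmax (hsub hw)
    have h3 : δ ≤ r - ‖w‖ := by linarith
    have h4 : 0 ≤ e w := hnonneg w
    rw [hfzs, hf] at h2
    simp only at h2
    have h5 : δ^2 * e w ≤ (r - ‖w‖)^2 * e w :=
      mul_le_mul_of_nonneg_right (pow_le_pow_left₀ hδ0.le h3 2) h4
    have hd2 : d^2 * c = 4 * δ^2 * c := by rw [hδ]; ring
    have h6 : δ^2 * e w ≤ δ^2 * (4 * c) := by linarith
    exact le_of_mul_le_mul_left h6 (by positivity)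
  have hlin : ∀ w ∈ Metric.closedBall zs δ, -(4*K*c * e w) ≤ lap e w := by
    intro w hw
    have h1 := hsup w hw
    have h2 := hnonneg w
    have h3 := hlapKe w
    nlinarith [mul_le_mul_of_nonneg_left (mul_le_mul_of_nonneg_right h1 h2) hK.le, sq (e w)]
  -- continuity: small ball where e < 2c
  have hev : ∀ᶠ w in nhds zs, e w < 2 * c := by
    have htd : Filter.Tendsto e (nhds zs) (nhds (e zs)) := hsmooth.continuous.continuousAt
    exact htd (Iio_mem_nhds (by rw [← hc]; linarith))
  obtain ⟨ε, hε0, hball⟩ := Metric.eventually_nhds_iff.1 hev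
  have hballsub : ∀ s : ℝ, ∀ w ∈ Metric.closedBall zs (min (ε/2) s), e w ≤ 4*c/2 := by
    intro s w hw
    have h1 : dist w zs ≤ min (ε/2) s := hw
    have h2 : dist w zs < ε := lt_of_le_of_lt (h1.trans (min_le_left _ _)) (by linarith)
    have := hball h2
    linarith
  by_cases hcase : δ^2 ≤ 1/(4*K*c)
  · -- main case
    set η : ℝ := min (ε/2) δ with hηdef
    have hη0 : 0 < η := lt_min (by linarith) hδ0
    have hηδ : η ≤ δ := min_le_right _ _
    have hmv := meanValue hsmooth zs hδ0 hη0 hηδ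
      (by positivity : (0:ℝ) ≤ 4*K*c) (by positivity : (0:ℝ) ≤ 4*c)
      hsup
      (fun w hw => hballsub δ w hw)
      hlin
    have hballs : Metric.ball zs δ ⊆ Metric.ball (0:ℂ) r := by
      intro w hw
      have h1 : ‖w - zs‖ < δ := by
        simpa [Metric.mem_ball, Complex.dist_eq] using hw
      have h2 : ‖w‖ ≤ ‖zs‖ + ‖w - zs‖ := by
        simpa using norm_add_le zs (w - zs)
      simp only [Metric.mem_ball, Complex.dist_eq, sub_zero]
      rw [hd] at *
      linarith
    have hIle : ∫ w in Metric.ball zs δ, e w ≤ M := by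
      rw [hM]
      exact setIntegral_mono_set hint (Filter.Eventually.of_forall fun x => hnonneg x)
        (HasSubset.Subset.eventuallyLE hballs)
    have hgain : 0 ≤ π*(4*c)*(4*K*c)/16 * η^2 * δ^2 := by positivity
    have hKδ : δ^2 * (4*K*c) ≤ 1 := (le_div_iff₀ (by positivity)).1 hcase
    have h2 : π*(4*c)*(4*K*c)/8 * δ^4 ≤ π*δ^2*c/2 := by
      nlinarith [mul_nonneg (show (0:ℝ) ≤ π*δ^2*c/2 by positivity)
        (sub_nonneg.2 hKδ), sq_nonneg δ, hπ.le, hc0.le]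
    have hfin : π * δ^2 * c / 2 ≤ M := by linarith
    have hf0le' : r^2 * e 0 ≤ 4 * δ^2 * c := by
      have : f zs = 4 * δ^2 * c := by rw [hfzs, hδ]; ring
      linarith
    rw [div_mul_eq_mul_div, le_div_iff₀ (by positivity : (0:ℝ) < π * r^2)]
    nlinarith [mul_le_mul_of_nonneg_left hf0le' hπ.le]
  · -- contradiction case
    exfalso
    push_neg at hcase
    have hs2pos : (0:ℝ) < 1/(4*K*c) := by positivity
    set s : ℝ := Real.sqrt (1/(4*K*c)) with hsdef
    have hs0 : 0 < s := Real.sqrt_pos.2 hs2pos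
    have hss : s^2 = 1/(4*K*c) := Real.sq_sqrt hs2pos.le
    have hsδ : s < δ := by
      have h := Real.sqrt_lt_sqrt hs2pos.le hcase
      rwa [Real.sqrt_sq hδ0.le, ← hsdef] at h
    set η : ℝ := min (ε/2) s with hηdef
    have hη0 : 0 < η := lt_min (by linarith) hs0
    have hηs : η ≤ s := min_le_right _ _
    have hmv := meanValue hsmooth zs hs0 hη0 hηs
      (by positivity : (0:ℝ) ≤ 4*K*c) (by positivity : (0:ℝ) ≤ 4*c)
      (fun w hw => hsup w (Metric.closedBall_subset_closedBall hsδ.le hw))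
      (fun w hw => hballsub s w hw)
      (fun w hw => hlin w (Metric.closedBall_subset_closedBall hsδ.le hw))
    have hballs : Metric.ball zs s ⊆ Metric.ball (0:ℂ) r := by
      intro w hw
      have h1 : ‖w - zs‖ < s := by
        simpa [Metric.mem_ball, Complex.dist_eq] using hw
      have h2 : ‖w‖ ≤ ‖zs‖ + ‖w - zs‖ := by
        simpa using norm_add_le zs (w - zs)
      simp only [Metric.mem_ball, Complex.dist_eq, sub_zero]
      rw [hd] at *
      have hδd : δ = (r - ‖zs‖)/2 := hδ
      linarith
    have hIle : ∫ w in Metric.ball zs s, e w ≤ M := by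
      rw [hM]
      exact setIntegral_mono_set hint (Filter.Eventually.of_forall fun x => hnonneg x)
        (HasSubset.Subset.eventuallyLE hballs)
    have e1 : π * s^2 * e zs = π/(4*K) := by
      rw [hss, ← hc]
      field_simp
    have e2 : π*(4*c)*(4*K*c)/8 * s^4 = π/(8*K) := by
      rw [show s^4 = (s^2)^2 by ring, hss]
      field_simp
    have e3 : π*(4*c)*(4*K*c)/16 * η^2 * s^2 = π*c*η^2/4 := by
      rw [hss]
      field_simp
      ring
    have e4 : π/(4*K) - π/(8*K) = π/(8*K) := by
      field_simp
      ring
    have hgain : 0 < π*c*η^2/4 := by positivity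
    rw [e1, e2, e3] at hmv
    linarith
end

section
/- Let e : ℂ → ℝ be a smooth nonnegative function with Δe ≥ -K·e² for a constant K > 0, with e(0) > 0, and suppose lim_{r→∞} ∫_{B_r} e = E for some finite E > 0. Then K ≥ π/(8E). -/
open MeasureTheory Real Filter Metric intervalIntegral

noncomputable section

namespace Stmt6Aux

def ce (θ : ℝ) : ℂ := Complex.exp (θ * Complex.I)

lemma continuous_ce : Continuous ce :=
  Complex.continuous_exp.comp (by continuity)

lemma hasDerivAt_ce (θ : ℝ) : HasDerivAt ce (ce θ * Complex.I) θ := by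
  have h1 : HasDerivAt (fun θ : ℝ => (θ : ℂ) * Complex.I) Complex.I θ := by
    simpa using (Complex.ofRealCLM.hasDerivAt (x := θ)).mul_const Complex.I
  exact h1.cexp

lemma ce_apply (θ : ℝ) : ce θ = (Real.cos θ : ℂ) + (Real.sin θ : ℂ) * Complex.I := by
  rw [ce, Complex.exp_mul_I]
  simp [Complex.ofReal_cos, Complex.ofReal_sin]

lemma ce_pi : ce π = -1 := by
  simp [ce, Complex.exp_pi_mul_I]

lemma ce_neg_pi : ce (-π) = -1 := by
  rw [ce]; push_cast; rw [neg_mul, Complex.exp_neg, Complex.exp_pi_mul_I]; norm_num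

lemma norm_ce (θ : ℝ) : ‖ce θ‖ = 1 := by
  simp [ce, Complex.norm_exp]

def zz (c : ℂ) (t θ : ℝ) : ℂ := c + t • ce θ

lemma continuous_zz (c : ℂ) : Continuous fun p : ℝ × ℝ => zz c p.1 p.2 :=
  continuous_const.add (continuous_fst.smul (continuous_ce.comp continuous_snd))

lemma hasDerivAt_zz_t (c : ℂ) (θ t : ℝ) : HasDerivAt (fun t => zz c t θ) (ce θ) t := by
  simpa [zz] using ((hasDerivAt_id t).smul_const (ce θ)).const_add c

lemma hasDerivAt_zz_theta (c : ℂ) (t θ : ℝ) :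
    HasDerivAt (fun θ => zz c t θ) (t • (ce θ * Complex.I)) θ :=
  ((hasDerivAt_ce θ).const_smul t).const_add c

end Stmt6Aux
noncomputable section

namespace Stmt6AuxB

open Stmt6Aux

variable {e : ℂ → ℝ}

def Lap (e : ℂ → ℝ) (z : ℂ) : ℝ :=
  fderiv ℝ (fun w => fderiv ℝ e w 1) z 1
    + fderiv ℝ (fun w => fderiv ℝ e w Complex.I) z Complex.I

lemma hdiff1 (hs : ContDiff ℝ (⊤ : ℕ∞) e) : Differentiable ℝ e := hs.differentiable (by simp)

lemma hF1cont (hs : ContDiff ℝ (⊤ : ℕ∞) e) : Continuous (fderiv ℝ e) :=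
  hs.continuous_fderiv (by simp)

lemma hsF1 (hs : ContDiff ℝ (⊤ : ℕ∞) e) : ContDiff ℝ (⊤ : ℕ∞) (fderiv ℝ e) :=
  hs.fderiv_right (by simp)

lemma hdiffF1 (hs : ContDiff ℝ (⊤ : ℕ∞) e) : Differentiable ℝ (fderiv ℝ e) :=
  (hsF1 hs).differentiable (by simp)

lemma hF2cont (hs : ContDiff ℝ (⊤ : ℕ∞) e) : Continuous (fderiv ℝ (fderiv ℝ e)) :=
  (hsF1 hs).continuous_fderiv (by simp)

/-- chain rule for a ℝ-valued C¹ function along a curve -/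
lemma hasDerivAt_comp_curve (hs : ContDiff ℝ (⊤ : ℕ∞) e) {γ : ℝ → ℂ} {γ' : ℂ} {t : ℝ}
    (hγ : HasDerivAt γ γ' t) :
    HasDerivAt (fun s => e (γ s)) (fderiv ℝ e (γ t) γ') t :=
  (hdiff1 hs (γ t)).hasFDerivAt.comp_hasDerivAt t hγ

/-- chain rule for the directional derivative along a curve -/
lemma hasDerivAt_dirderiv (hs : ContDiff ℝ (⊤ : ℕ∞) e) (v : ℂ) {γ : ℝ → ℂ} {γ' : ℂ} {t : ℝ}
    (hγ : HasDerivAt γ γ' t) :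
    HasDerivAt (fun s => fderiv ℝ e (γ s) v)
      ((fderiv ℝ (fderiv ℝ e) (γ t) γ') v) t := by
  have h2 : HasDerivAt (fun s => fderiv ℝ e (γ s)) (fderiv ℝ (fderiv ℝ e) (γ t) γ') t :=
    (hdiffF1 hs (γ t)).hasFDerivAt.comp_hasDerivAt t hγ
  simpa using h2.clm_apply (hasDerivAt_const t v)

lemma fderiv_dir (hs : ContDiff ℝ (⊤ : ℕ∞) e) (z u v : ℂ) :
    fderiv ℝ (fun w => fderiv ℝ e w v) z u = (fderiv ℝ (fderiv ℝ e) z u) v := by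
  have h1 : HasFDerivAt (fun w => fderiv ℝ e w v)
      ((ContinuousLinearMap.apply ℝ ℝ v).comp (fderiv ℝ (fderiv ℝ e) z)) z :=
    (ContinuousLinearMap.apply ℝ ℝ v).hasFDerivAt.comp z (hdiffF1 hs z).hasFDerivAt
  rw [h1.fderiv]
  rfl

lemma Lap_eq (hs : ContDiff ℝ (⊤ : ℕ∞) e) (z : ℂ) :
    Lap e z = (fderiv ℝ (fderiv ℝ e) z 1) 1
      + (fderiv ℝ (fderiv ℝ e) z Complex.I) Complex.I := by
  rw [Lap, fderiv_dir hs, fderiv_dir hs]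

lemma continuous_Lap (hs : ContDiff ℝ (⊤ : ℕ∞) e) : Continuous (Lap e) := by
  have : Lap e = fun z => (fderiv ℝ (fderiv ℝ e) z 1) 1
      + (fderiv ℝ (fderiv ℝ e) z Complex.I) Complex.I := funext (Lap_eq hs)
  rw [this]
  exact (((hF2cont hs).clm_apply continuous_const).clm_apply continuous_const).add
    (((hF2cont hs).clm_apply continuous_const).clm_apply continuous_const)

lemma DD_circle (hs : ContDiff ℝ (⊤ : ℕ∞) e) (z : ℂ) (θ : ℝ) :
    (fderiv ℝ (fderiv ℝ e) z (ce θ)) (ce θ)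
      + (fderiv ℝ (fderiv ℝ e) z (Complex.I * ce θ)) (Complex.I * ce θ) = Lap e z := by
  have hce : ce θ = (Real.cos θ) • (1:ℂ) + (Real.sin θ) • Complex.I := by
    rw [ce_apply]; simp [Complex.real_smul]
  have hice : Complex.I * ce θ = (-Real.sin θ) • (1:ℂ) + (Real.cos θ) • Complex.I := by
    rw [hce, mul_add, mul_smul_comm, mul_smul_comm, mul_one, Complex.I_mul_I]
    module
  rw [Lap_eq hs, hice, hce]
  simp only [map_add, _root_.map_smul, ContinuousLinearMap.add_apply,
    ContinuousLinearMap.smul_apply, ContinuousLinearMap.coe_smul', Pi.smul_apply, smul_eq_mul]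
  have h := sin_sq_add_cos_sq θ
  set A := (fderiv ℝ (fderiv ℝ e) z 1) 1
  set B := (fderiv ℝ (fderiv ℝ e) z 1) Complex.I
  set C := (fderiv ℝ (fderiv ℝ e) z Complex.I) 1
  set D := (fderiv ℝ (fderiv ℝ e) z Complex.I) Complex.I
  linear_combination (A + D) * h

end Stmt6AuxB
namespace Stmt6AuxB

open Stmt6Aux

lemma neg_pi_le_pi : (-π : ℝ) ≤ π := by linarith [pi_pos]

/-- differentiation under the interval integral, continuous setting -/
lemma hasDerivAt_param {F F' : ℝ → ℝ → ℝ}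
    (hF : Continuous fun p : ℝ × ℝ => F p.1 p.2)
    (hF' : Continuous fun p : ℝ × ℝ => F' p.1 p.2)
    (hd : ∀ x t, HasDerivAt (fun x => F x t) (F' x t) x) (x₀ : ℝ) :
    HasDerivAt (fun x => ∫ t in (-π)..π, F x t) (∫ t in (-π)..π, F' x₀ t) x₀ := by
  obtain ⟨C, hC⟩ := IsCompact.exists_bound_of_continuousOn
    ((isCompact_Icc (a := x₀ - 1) (b := x₀ + 1)).prod (isCompact_Icc (a := -π) (b := π)))
    hF'.continuousOn
  refine (intervalIntegral.hasDerivAt_integral_of_dominated_loc_of_deriv_le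
    (F := F) (F' := F') (bound := fun _ => C) (Metric.ball_mem_nhds x₀ zero_lt_one) ?_ ?_ ?_ ?_ ?_ ?_).2
  · exact Filter.Eventually.of_forall fun x =>
      ((hF.comp (Continuous.prodMk_right x)).aestronglyMeasurable)
  · exact (hF.comp (Continuous.prodMk_right x₀)).intervalIntegrable _ _
  · exact (hF'.comp (Continuous.prodMk_right x₀)).aestronglyMeasurable
  · refine Filter.Eventually.of_forall fun t ht x hx => hC (x, t) ⟨?_, ?_⟩
    · rw [Real.ball_eq_Ioo] at hx
      exact ⟨hx.1.le, hx.2.le⟩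
    · rw [Set.uIoc_of_le neg_pi_le_pi] at ht
      exact ⟨ht.1.le, ht.2⟩
  · exact intervalIntegrable_const
  · exact Filter.Eventually.of_forall fun t ht x hx => hd x t

variable {e : ℂ → ℝ}

def phi (e : ℂ → ℝ) (c : ℂ) (t : ℝ) : ℝ := ∫ θ in (-π)..π, e (zz c t θ)
def gg (e : ℂ → ℝ) (c : ℂ) (t : ℝ) : ℝ := ∫ θ in (-π)..π, fderiv ℝ e (zz c t θ) (ce θ)
def lam (e : ℂ → ℝ) (c : ℂ) (t : ℝ) : ℝ := ∫ θ in (-π)..π, Lap e (zz c t θ)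

lemma hasDerivAt_phi (hs : ContDiff ℝ (⊤ : ℕ∞) e) (c : ℂ) (t : ℝ) :
    HasDerivAt (phi e c) (gg e c t) t := by
  exact hasDerivAt_param
    (hs.continuous.comp (continuous_zz c))
    (((hF1cont hs).comp (continuous_zz c)).clm_apply (continuous_ce.comp continuous_snd))
    (fun x θ => hasDerivAt_comp_curve hs (hasDerivAt_zz_t c θ x)) t

lemma continuous_phi (hs : ContDiff ℝ (⊤ : ℕ∞) e) (c : ℂ) : Continuous (phi e c) :=
  continuous_iff_continuousAt.2 fun t => (hasDerivAt_phi hs c t).continuousAt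

lemma hasDerivAt_tg (hs : ContDiff ℝ (⊤ : ℕ∞) e) (c : ℂ) (t : ℝ) :
    HasDerivAt (fun t => t * gg e c t) (t * lam e c t) t := by
  have hrw : (fun x : ℝ => x * gg e c x)
      = fun x => ∫ θ in (-π)..π, x * fderiv ℝ e (zz c x θ) (ce θ) := by
    funext x
    rw [gg, intervalIntegral.integral_const_mul]
  have key : HasDerivAt (fun x => ∫ θ in (-π)..π, x * fderiv ℝ e (zz c x θ) (ce θ))
      (∫ θ in (-π)..π, (fderiv ℝ e (zz c t θ) (ce θ)
        + t * (fderiv ℝ (fderiv ℝ e) (zz c t θ) (ce θ)) (ce θ))) t := by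
    refine hasDerivAt_param (F := fun x θ => x * fderiv ℝ e (zz c x θ) (ce θ))
      (F' := fun x θ => fderiv ℝ e (zz c x θ) (ce θ)
        + x * (fderiv ℝ (fderiv ℝ e) (zz c x θ)) (ce θ) (ce θ)) ?_ ?_ ?_ t
    · exact continuous_fst.mul
        (((hF1cont hs).comp (continuous_zz c)).clm_apply (continuous_ce.comp continuous_snd))
    · apply Continuous.add
      · exact ((hF1cont hs).comp (continuous_zz c)).clm_apply (continuous_ce.comp continuous_snd)
      · exact continuous_fst.mul
          ((((hF2cont hs).comp (continuous_zz c)).clm_apply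
            (continuous_ce.comp continuous_snd)).clm_apply
            (continuous_ce.comp continuous_snd))
    · intro x θ
      have h1 := (hasDerivAt_id' x).mul
        (hasDerivAt_dirderiv hs (ce θ) (hasDerivAt_zz_t c θ x))
      simpa [add_comm, Pi.mul_def] using h1
  -- now compute the integral of the derivative
  have hA : ∀ θ : ℝ, HasDerivAt (fun θ => fderiv ℝ e (zz c t θ) (Complex.I * ce θ))
      (t * (fderiv ℝ (fderiv ℝ e) (zz c t θ) (Complex.I * ce θ)) (Complex.I * ce θ)
        - fderiv ℝ e (zz c t θ) (ce θ)) θ := by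
    intro θ
    have hc : HasDerivAt (fun θ => fderiv ℝ e (zz c t θ))
        (fderiv ℝ (fderiv ℝ e) (zz c t θ) (t • (ce θ * Complex.I))) θ :=
      (hdiffF1 hs (zz c t θ)).hasFDerivAt.comp_hasDerivAt θ (hasDerivAt_zz_theta c t θ)
    have hu : HasDerivAt (fun θ => Complex.I * ce θ) (Complex.I * (ce θ * Complex.I)) θ :=
      (hasDerivAt_ce θ).const_mul Complex.I
    have h2 := hc.clm_apply hu
    have e1 : Complex.I * (ce θ * Complex.I) = -ce θ := by
      rw [mul_comm, mul_assoc, Complex.I_mul_I, mul_neg_one]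
    have e2 : ce θ * Complex.I = Complex.I * ce θ := mul_comm _ _
    rw [e1, e2, _root_.map_smul] at h2
    simpa [ContinuousLinearMap.smul_apply, smul_eq_mul, map_neg, sub_eq_add_neg] using h2
  have hsplit : (∫ θ in (-π)..π, (fderiv ℝ e (zz c t θ) (ce θ)
        + t * (fderiv ℝ (fderiv ℝ e) (zz c t θ) (ce θ)) (ce θ))) = t * lam e c t := by
    have hptw : ∀ θ : ℝ, fderiv ℝ e (zz c t θ) (ce θ)
        + t * (fderiv ℝ (fderiv ℝ e) (zz c t θ) (ce θ)) (ce θ)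
        = t * Lap e (zz c t θ)
          - (t * (fderiv ℝ (fderiv ℝ e) (zz c t θ) (Complex.I * ce θ)) (Complex.I * ce θ)
            - fderiv ℝ e (zz c t θ) (ce θ)) := by
      intro θ
      have := DD_circle hs (zz c t θ) θ
      linear_combination t * this
    rw [intervalIntegral.integral_congr (g := fun θ => t * Lap e (zz c t θ)
      - (t * (fderiv ℝ (fderiv ℝ e) (zz c t θ) (Complex.I * ce θ)) (Complex.I * ce θ)
        - fderiv ℝ e (zz c t θ) (ce θ))) (fun θ _ => hptw θ)]
    have hz : Continuous fun θ : ℝ => zz c t θ :=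
      (continuous_zz c).comp (continuous_const.prodMk continuous_id)
    have hIce : Continuous fun θ : ℝ => Complex.I * ce θ := continuous_const.mul continuous_ce
    have hcontA : Continuous fun θ : ℝ =>
        t * (fderiv ℝ (fderiv ℝ e) (zz c t θ) (Complex.I * ce θ)) (Complex.I * ce θ)
          - fderiv ℝ e (zz c t θ) (ce θ) :=
      (continuous_const.mul ((((hF2cont hs).comp hz).clm_apply hIce).clm_apply hIce)).sub
        (((hF1cont hs).comp hz).clm_apply continuous_ce)
    have hcontL : Continuous fun θ : ℝ => t * Lap e (zz c t θ) :=
      continuous_const.mul ((continuous_Lap hs).comp hz)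
    rw [intervalIntegral.integral_sub (hcontL.intervalIntegrable _ _)
      (hcontA.intervalIntegrable _ _)]
    have hzero : (∫ θ in (-π)..π,
        (t * (fderiv ℝ (fderiv ℝ e) (zz c t θ) (Complex.I * ce θ)) (Complex.I * ce θ)
          - fderiv ℝ e (zz c t θ) (ce θ))) = 0 := by
      rw [intervalIntegral.integral_eq_sub_of_hasDerivAt (fun θ _ => hA θ)
        (hcontA.intervalIntegrable _ _)]
      have hper : zz c t π = zz c t (-π) := by rw [zz, zz, ce_pi, ce_neg_pi]
      rw [ce_pi, ce_neg_pi, hper, sub_self]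
    rw [hzero, sub_zero, lam, intervalIntegral.integral_const_mul]
  rw [hrw]
  rwa [hsplit] at key

end Stmt6AuxB
namespace Stmt6AuxB

open Stmt6Aux Set

lemma zz_symm (c : ℂ) (t θ : ℝ) : c + Complex.polarCoord.symm (t, θ) = zz c t θ := by
  rw [Complex.polarCoord_symm_apply, zz, ce_apply, Complex.real_smul]

lemma norm_polar_symm (t θ : ℝ) : ‖Complex.polarCoord.symm (t, θ)‖ = |t| := by
  rw [Complex.norm_polarCoord_symm]

lemma polar (hs : ContDiff ℝ (⊤ : ℕ∞) e) (c : ℂ) {ρ : ℝ} (hρ : 0 < ρ) :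
    ∫ z in Metric.ball c ρ, e z = ∫ t in (0:ℝ)..ρ, t * phi e c t := by
  set f : ℂ → ℝ := (Metric.ball (0:ℂ) ρ).indicator (fun w => e (c + w)) with hf
  have h1 : ∫ p, f p = ∫ z in Metric.ball c ρ, e z := by
    rw [hf, MeasureTheory.integral_indicator measurableSet_ball]
    have hmp : MeasurePreserving (fun w : ℂ => c + w) volume volume :=
      measurePreserving_add_left volume c
    have hpre : (fun w : ℂ => c + w) ⁻¹' Metric.ball c ρ = Metric.ball 0 ρ := by
      ext w
      simp [Metric.mem_ball, dist_eq_norm]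
    rw [← hpre, hmp.setIntegral_preimage_emb (MeasurableEquiv.addLeft c).measurableEmbedding]
  have h2 := (Complex.integral_comp_polarCoord_symm f).symm
  rw [h1] at h2
  rw [h2]
  have h3 : ∀ p ∈ polarCoord.target,
      p.1 • f (Complex.polarCoord.symm p)
        = (Ioo (0:ℝ) ρ ×ˢ Ioo (-π) π).indicator
            (fun p : ℝ × ℝ => p.1 * e (zz c p.1 p.2)) p := by
    rintro ⟨t, θ⟩ hp
    rw [polarCoord_target, mem_prod] at hp
    obtain ⟨ht, hθ⟩ := hp
    rw [mem_Ioi] at ht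
    by_cases h : t < ρ
    · have hmem1 : Complex.polarCoord.symm (t, θ) ∈ Metric.ball (0:ℂ) ρ := by
        rw [mem_ball_zero_iff, norm_polar_symm, abs_of_pos ht]
        exact h
      rw [hf, Set.indicator_of_mem hmem1, Set.indicator_of_mem (by exact ⟨⟨ht, h⟩, hθ⟩)]
      rw [smul_eq_mul, zz_symm]
    · have hmem1 : Complex.polarCoord.symm (t, θ) ∉ Metric.ball (0:ℂ) ρ := by
        rw [mem_ball_zero_iff, norm_polar_symm, abs_of_pos ht]
        exact fun hc => h hc
      rw [hf, Set.indicator_of_notMem hmem1, Set.indicator_of_notMem (by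
        rintro ⟨⟨_, h2⟩, _⟩; exact h h2), smul_zero]
  rw [MeasureTheory.setIntegral_congr_fun (by
    rw [polarCoord_target]; exact measurableSet_Ioi.prod measurableSet_Ioo) h3]
  rw [MeasureTheory.setIntegral_indicator (measurableSet_Ioo.prod measurableSet_Ioo)]
  rw [show polarCoord.target ∩ (Ioo (0:ℝ) ρ ×ˢ Ioo (-π) π) = Ioo (0:ℝ) ρ ×ˢ Ioo (-π) π from
    inter_eq_self_of_subset_right (by
      rw [polarCoord_target]
      exact prod_mono Ioo_subset_Ioi_self (subset_refl _))]
  have hcont : Continuous fun p : ℝ × ℝ => p.1 * e (zz c p.1 p.2) :=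
    continuous_fst.mul (hs.continuous.comp (continuous_zz c))
  have hint : IntegrableOn (fun p : ℝ × ℝ => p.1 * e (zz c p.1 p.2))
      (Ioo (0:ℝ) ρ ×ˢ Ioo (-π) π) volume :=
    (ContinuousOn.integrableOn_compact
      ((isCompact_Icc (a := (0:ℝ)) (b := ρ)).prod (isCompact_Icc (a := -π) (b := π)))
      hcont.continuousOn).mono_set
      (prod_mono Ioo_subset_Icc_self Ioo_subset_Icc_self)
  rw [MeasureTheory.Measure.volume_eq_prod] at hint
  rw [show (volume : MeasureTheory.Measure (ℝ × ℝ))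
      = (volume : MeasureTheory.Measure ℝ).prod volume from MeasureTheory.Measure.volume_eq_prod ℝ ℝ]
  rw [MeasureTheory.setIntegral_prod _ hint]
  rw [intervalIntegral.integral_of_le hρ.le, MeasureTheory.integral_Ioc_eq_integral_Ioo]
  refine MeasureTheory.setIntegral_congr_fun measurableSet_Ioo fun t _ => ?_
  rw [phi, intervalIntegral.integral_of_le neg_pi_le_pi,
    MeasureTheory.integral_Ioc_eq_integral_Ioo, ← MeasureTheory.integral_const_mul]

end Stmt6AuxB
namespace Stmt6AuxB

open Stmt6Aux Set

lemma meanvalue (hs : ContDiff ℝ (⊤ : ℕ∞) e) (c : ℂ) {a ρ : ℝ} (hρ : 0 < ρ) (ha : 0 ≤ a)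
    (hΔ : ∀ z ∈ Metric.closedBall c ρ, -a ≤ Lap e z) :
    e c ≤ (∫ z in Metric.ball c ρ, e z) / (π * ρ ^ 2) + a * ρ ^ 2 / 8 := by
  have hzc : ∀ t : ℝ, Continuous fun θ => zz c t θ := fun t =>
    (continuous_zz c).comp (continuous_const.prodMk continuous_id)
  have hlam : ∀ t ∈ Set.Icc (0:ℝ) ρ, -(2 * π * a) ≤ lam e c t := by
    intro t ht
    have hmem : ∀ θ : ℝ, zz c t θ ∈ Metric.closedBall c ρ := by
      intro θ
      rw [Metric.mem_closedBall, dist_eq_norm, zz, add_sub_cancel_left, norm_smul, norm_ce,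
        mul_one, Real.norm_eq_abs, abs_of_nonneg ht.1]
      exact ht.2
    have h1 : ∫ θ in (-π)..π, (-a) ≤ ∫ θ in (-π)..π, Lap e (zz c t θ) :=
      intervalIntegral.integral_mono_on neg_pi_le_pi intervalIntegrable_const
        (((continuous_Lap hs).comp (hzc t)).intervalIntegrable _ _)
        (fun θ _ => hΔ _ (hmem θ))
    rw [intervalIntegral.integral_const] at h1
    rw [lam]
    have : (π - -π) • (-a) = -(2 * π * a) := by rw [smul_eq_mul]; ring
    linarith [this ▸ h1]
  have hΨd : ∀ t : ℝ, HasDerivAt (fun t => t * gg e c t + π * a * t ^ 2)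
      (t * lam e c t + π * a * (2 * t)) t := by
    intro t
    have h2 : HasDerivAt (fun t : ℝ => π * a * t ^ 2) (π * a * (2 * t)) t := by
      simpa using (hasDerivAt_pow 2 t).const_mul (π * a)
    exact (hasDerivAt_tg hs c t).add h2
  have hΨmono : MonotoneOn (fun t => t * gg e c t + π * a * t ^ 2) (Set.Icc 0 ρ) := by
    apply monotoneOn_of_deriv_nonneg (convex_Icc 0 ρ)
    · exact (continuous_iff_continuousAt.2 fun t =>
        (hΨd t).differentiableAt.continuousAt).continuousOn
    · exact fun t _ => (hΨd t).differentiableAt.differentiableWithinAt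
    · intro t ht
      rw [interior_Icc] at ht
      rw [(hΨd t).deriv]
      have h1 := hlam t ⟨ht.1.le, ht.2.le⟩
      nlinarith [ht.1, mul_le_mul_of_nonneg_left h1 ht.1.le]
  have hgg_lb : ∀ t ∈ Set.Icc (0:ℝ) ρ, -(π * a * t ^ 2) ≤ t * gg e c t := by
    intro t ht
    have h1 := hΨmono (Set.left_mem_Icc.2 hρ.le) ht ht.1
    simp only [zero_mul, ne_eq, OfNat.ofNat_ne_zero, not_false_eq_true, zero_pow, mul_zero,
      add_zero, zero_add] at h1
    linarith
  have hχd : ∀ t : ℝ, HasDerivAt (fun t => phi e c t + π * a * t ^ 2 / 2)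
      (gg e c t + π * a * t) t := by
    intro t
    have h3 : HasDerivAt (fun t : ℝ => π * a * t ^ 2 / 2) (π * a * t) t := by
      have h3' := ((hasDerivAt_pow 2 t).const_mul (π * a)).div_const 2
      refine h3'.congr_deriv ?_
      simp
      ring
    exact (hasDerivAt_phi hs c t).add h3
  have hχmono : MonotoneOn (fun t => phi e c t + π * a * t ^ 2 / 2) (Set.Icc 0 ρ) := by
    apply monotoneOn_of_deriv_nonneg (convex_Icc 0 ρ)
    · exact (continuous_iff_continuousAt.2 fun t =>
        (hχd t).differentiableAt.continuousAt).continuousOn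
    · exact fun t _ => (hχd t).differentiableAt.differentiableWithinAt
    · intro t ht
      rw [interior_Icc] at ht
      rw [(hχd t).deriv]
      by_contra hneg
      push_neg at hneg
      nlinarith [hgg_lb t ⟨ht.1.le, ht.2.le⟩, ht.1, mul_lt_mul_of_pos_left hneg ht.1]
  have hphi0 : phi e c 0 = 2 * π * e c := by
    have hzz0 : ∀ θ : ℝ, zz c 0 θ = c := fun θ => by rw [zz, zero_smul, add_zero]
    rw [phi]
    simp only [hzz0, intervalIntegral.integral_const, smul_eq_mul]
    ring
  have hphi_lb : ∀ t ∈ Set.Icc (0:ℝ) ρ, 2 * π * e c - π * a * t ^ 2 / 2 ≤ phi e c t := by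
    intro t ht
    have h1 := hχmono (Set.left_mem_Icc.2 hρ.le) ht ht.1
    simp only [ne_eq, OfNat.ofNat_ne_zero, not_false_eq_true, zero_pow, mul_zero, zero_div,
      add_zero] at h1
    rw [hphi0] at h1
    linarith
  have hball := polar hs c hρ
  have hcphi : Continuous fun t : ℝ => t * phi e c t := continuous_id.mul (continuous_phi hs c)
  have hlow : ∫ t in (0:ℝ)..ρ, (2 * π * e c * t - π * a / 2 * t ^ 3)
      ≤ ∫ t in (0:ℝ)..ρ, t * phi e c t := by
    apply intervalIntegral.integral_mono_on hρ.le
      ((((continuous_const.mul continuous_id').sub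
        (continuous_const.mul (continuous_pow 3))) : Continuous fun t : ℝ =>
        2 * π * e c * t - π * a / 2 * t ^ 3).intervalIntegrable _ _)
      (hcphi.intervalIntegrable _ _)
    intro t ht
    have h := hphi_lb t ht
    show 2 * π * e c * t - π * a / 2 * t ^ 3 ≤ t * phi e c t
    nlinarith [mul_le_mul_of_nonneg_left h ht.1]
  have hcalc : ∫ t in (0:ℝ)..ρ, (2 * π * e c * t - π * a / 2 * t ^ 3)
      = π * ρ ^ 2 * e c - π * a * ρ ^ 4 / 8 := by
    rw [intervalIntegral.integral_sub (f := fun t : ℝ => 2 * π * e c * t) (g := fun t : ℝ => π * a / 2 * t ^ 3)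
      (((continuous_const.mul continuous_id') : Continuous fun t : ℝ => 2 * π * e c * t).intervalIntegrable _ _)
      (((continuous_const.mul (continuous_pow 3)) : Continuous fun t : ℝ => π * a / 2 * t ^ 3).intervalIntegrable _ _),
      intervalIntegral.integral_const_mul, intervalIntegral.integral_const_mul,
      integral_id, integral_pow]
    push_cast
    ring
  have hfinal : π * ρ ^ 2 * e c - π * a * ρ ^ 4 / 8 ≤ ∫ z in Metric.ball c ρ, e z := by
    rw [hball]
    linarith [hlow, hcalc]
  have hπρ : 0 < π * ρ ^ 2 := by positivity
  have h5 : e c - a * ρ ^ 2 / 8 ≤ (∫ z in Metric.ball c ρ, e z) / (π * ρ ^ 2) := by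
    rw [le_div_iff₀ hπρ]
    nlinarith [hfinal]
  linarith

end Stmt6AuxB

set_option maxHeartbeats 2000000
open Stmt6Aux Stmt6AuxB

/-- If `e : ℂ → ℝ` is smooth, nonnegative, satisfies `Δe ≥ -K e²` with `K > 0`,
`e 0 > 0`, and `∫_{B_r} e → E > 0` as `r → ∞`, then `K ≥ π/(8E)`. -/
theorem stmt6 (e : ℂ → ℝ) (K E : ℝ) (hK : 0 < K) (hE : 0 < E)
    (hsmooth : ContDiff ℝ (⊤ : ℕ∞) e) (hnonneg : ∀ z, 0 ≤ e z)
    (hineq : ∀ z : ℂ,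
      fderiv ℝ (fun w => fderiv ℝ e w 1) z 1
        + fderiv ℝ (fun w => fderiv ℝ e w Complex.I) z Complex.I
        ≥ -K * (e z) ^ 2)
    (h0 : 0 < e 0)
    (hlim : Filter.Tendsto (fun r : ℝ => ∫ z in Metric.ball (0:ℂ) r, e z)
      Filter.atTop (nhds E)) :
    π / (8 * E) ≤ K := by
  by_contra hcon
  push_neg at hcon
  have h8KE : 8 * K * E < π := by
    rw [lt_div_iff₀ (by linarith : (0:ℝ) < 8 * E)] at hcon
    linarith
  -- integrability and monotonicity of ball integrals
  have hIntOn : ∀ (c : ℂ) (R : ℝ), MeasureTheory.IntegrableOn e (Metric.ball c R) :=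
    fun c R => (ContinuousOn.integrableOn_compact (isCompact_closedBall c R)
      hsmooth.continuous.continuousOn).mono_set Metric.ball_subset_closedBall
  have hmono : Monotone fun r : ℝ => ∫ z in Metric.ball (0:ℂ) r, e z := by
    intro r1 r2 h12
    exact MeasureTheory.setIntegral_mono_set (hIntOn 0 r2) (MeasureTheory.ae_of_all _ hnonneg)
      ((Metric.ball_subset_ball h12).eventuallyLE)
  have hballE : ∀ (c : ℂ) (R : ℝ), ∫ z in Metric.ball c R, e z ≤ E := by
    intro c R
    have hsub : Metric.ball c R ⊆ Metric.ball (0:ℂ) (‖c‖ + max R 0 + 1) := by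
      intro z hz
      rw [Metric.mem_ball, dist_eq_norm] at hz ⊢
      have h1 : ‖z‖ - ‖c‖ ≤ ‖z - c‖ := norm_sub_norm_le z c
      have h2 : R ≤ max R 0 := le_max_left _ _
      rw [sub_zero]
      linarith
    have h1 : ∫ z in Metric.ball c R, e z ≤ ∫ z in Metric.ball (0:ℂ) (‖c‖ + max R 0 + 1), e z :=
      MeasureTheory.setIntegral_mono_set (hIntOn 0 _) (MeasureTheory.ae_of_all _ hnonneg)
        hsub.eventuallyLE
    exact h1.trans (hmono.ge_of_tendsto hlim _)
  -- choice of radius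
  set r : ℝ := Real.sqrt (8 * E / (π * e 0)) + 1 with hrdef
  have hrpos : 0 < r := by positivity
  have hq : Real.sqrt (8 * E / (π * e 0)) ^ 2 = 8 * E / (π * e 0) :=
    Real.sq_sqrt (by positivity)
  have hr2 : 8 * E < π * (r ^ 2 * e 0) := by
    have hrgt : 8 * E / (π * e 0) < r ^ 2 := by
      nlinarith [Real.sqrt_nonneg (8 * E / (π * e 0))]
    rw [div_lt_iff₀ (by positivity : (0:ℝ) < π * e 0)] at hrgt
    nlinarith [hrgt]
  -- point picking
  obtain ⟨z₀, hz₀mem, hz₀max⟩ := (isCompact_closedBall (0:ℂ) r).exists_isMaxOn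
    (Metric.nonempty_closedBall.2 hrpos.le)
    (Continuous.continuousOn (((continuous_const.sub continuous_norm).pow 2).mul
      hsmooth.continuous) : ContinuousOn (fun z : ℂ => (r - ‖z‖) ^ 2 * e z) _)
  have h0mem : (0:ℂ) ∈ Metric.closedBall (0:ℂ) r := Metric.mem_closedBall_self hrpos.le
  have hmax : ∀ z ∈ Metric.closedBall (0:ℂ) r, (r - ‖z‖) ^ 2 * e z ≤ (r - ‖z₀‖) ^ 2 * e z₀ :=
    fun z hz => isMaxOn_iff.1 hz₀max z hz
  have hmax0 : r ^ 2 * e 0 ≤ (r - ‖z₀‖) ^ 2 * e z₀ := by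
    have := hmax 0 h0mem
    simpa using this
  have habs : ‖z₀‖ ≤ r := mem_closedBall_zero_iff.1 hz₀mem
  have he₀pos : 0 < e z₀ := by
    rcases lt_or_eq_of_le (hnonneg z₀) with h | h
    · exact h
    · exfalso; rw [← h, mul_zero] at hmax0; nlinarith [mul_pos (pow_pos hrpos 2) h0]
  have hrz : 0 < r - ‖z₀‖ := by
    rcases lt_or_eq_of_le (sub_nonneg.2 habs) with h | h
    · exact h
    · exfalso
      rw [← h] at hmax0
      simp only [ne_eq, OfNat.ofNat_ne_zero, not_false_eq_true, zero_pow, zero_mul] at hmax0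
      nlinarith [mul_pos (pow_pos hrpos 2) h0]
  set ρ₀ : ℝ := (r - ‖z₀‖) / 2 with hρ₀def
  have hρ₀ : 0 < ρ₀ := by positivity
  -- bound e on the ball around z₀
  have hbound : ∀ z ∈ Metric.closedBall z₀ ρ₀, e z ≤ 4 * e z₀ := by
    intro z hz
    rw [Metric.mem_closedBall, dist_eq_norm] at hz
    have h1 : ‖z‖ - ‖z₀‖ ≤ ‖z - z₀‖ := norm_sub_norm_le z z₀
    have h2 : ρ₀ ≤ r - ‖z‖ := by
      rw [hρ₀def] at *
      linarith
    have hzmem : z ∈ Metric.closedBall (0:ℂ) r := by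
      rw [mem_closedBall_zero_iff]
      linarith [hρ₀]
    have h3 := hmax z hzmem
    have h4 : (r - ‖z₀‖) ^ 2 = 4 * ρ₀ ^ 2 := by rw [hρ₀def]; ring
    have h5 : ρ₀ ^ 2 ≤ (r - ‖z‖) ^ 2 := by nlinarith [hρ₀]
    have h6 : ρ₀ ^ 2 * e z ≤ (r - ‖z‖) ^ 2 * e z :=
      mul_le_mul_of_nonneg_right h5 (hnonneg z)
    nlinarith [h3, h6, hρ₀, mul_pos hρ₀ hρ₀]
  -- the scale ρ
  set ρ : ℝ := min ρ₀ (Real.sqrt (1 / (4 * K * e z₀))) with hρdef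
  have hρpos : 0 < ρ := lt_min hρ₀ (Real.sqrt_pos.2 (by positivity))
  have hρle : ρ ≤ ρ₀ := min_le_left _ _
  have hρsq : ρ ^ 2 ≤ 1 / (4 * K * e z₀) := by
    have h1 : ρ ≤ Real.sqrt (1 / (4 * K * e z₀)) := min_le_right _ _
    have h2 : ρ ^ 2 ≤ Real.sqrt (1 / (4 * K * e z₀)) ^ 2 :=
      pow_le_pow_left₀ hρpos.le h1 2
    rwa [Real.sq_sqrt (by positivity : (0:ℝ) ≤ 1 / (4 * K * e z₀))] at h2
  set a : ℝ := 16 * K * e z₀ ^ 2 with hadef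
  have hΔ : ∀ z ∈ Metric.closedBall z₀ ρ, -a ≤ Lap e z := by
    intro z hz
    have h2 : -K * e z ^ 2 ≤ Lap e z := by unfold Lap; exact hineq z
    have h3 := hbound z (Metric.closedBall_subset_closedBall hρle hz)
    have h4 : e z * e z ≤ 4 * e z₀ * (4 * e z₀) :=
      mul_le_mul h3 h3 (hnonneg z) (by positivity)
    have h4' : e z ^ 2 ≤ 16 * e z₀ ^ 2 := by ring_nf at h4 ⊢; linarith
    have h5 : K * e z ^ 2 ≤ K * (16 * e z₀ ^ 2) := mul_le_mul_of_nonneg_left h4' hK.le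
    rw [hadef]
    linarith
  have hmv := meanvalue hsmooth z₀ hρpos (by positivity) hΔ
  have hIb := hballE z₀ ρ
  have hd : (∫ z in Metric.ball z₀ ρ, e z) / (π * ρ ^ 2) ≤ E / (π * ρ ^ 2) := by
    gcongr
  have h6 : e z₀ ≤ E / (π * ρ ^ 2) + a * ρ ^ 2 / 8 := by linarith
  have h7 : a * ρ ^ 2 / 8 ≤ e z₀ / 2 := by
    have h1 : 2 * K * e z₀ ^ 2 * ρ ^ 2 ≤ 2 * K * e z₀ ^ 2 * (1 / (4 * K * e z₀)) :=
      mul_le_mul_of_nonneg_left hρsq (by positivity)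
    have h2 : 2 * K * e z₀ ^ 2 * (1 / (4 * K * e z₀)) = e z₀ / 2 := by
      field_simp
      ring
    rw [hadef]
    linarith
  by_cases hcase : Real.sqrt (1 / (4 * K * e z₀)) ≤ ρ₀
  · -- small scale wins : π ≤ 8KE, contradiction
    have hρeq : ρ ^ 2 = 1 / (4 * K * e z₀) := by
      rw [hρdef, min_eq_right hcase]
      exact Real.sq_sqrt (by positivity)
    have h8 : e z₀ / 2 ≤ E / (π * ρ ^ 2) := by linarith
    rw [hρeq] at h8
    have h9 : E / (π * (1 / (4 * K * e z₀))) = 4 * K * E * e z₀ / π := by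
      field_simp
    rw [h9, le_div_iff₀ pi_pos] at h8
    nlinarith [h8, h8KE, he₀pos]
  · push_neg at hcase
    have hρeq : ρ = ρ₀ := min_eq_left hcase.le
    have h8 : e z₀ / 2 ≤ E / (π * ρ₀ ^ 2) := by rw [← hρeq]; linarith
    have hπρ : 0 < π * ρ₀ ^ 2 := by positivity
    rw [le_div_iff₀ hπρ] at h8
    have h10 : r ^ 2 * e 0 ≤ 4 * ρ₀ ^ 2 * e z₀ := by
      have h4 : (r - ‖z₀‖) ^ 2 = 4 * ρ₀ ^ 2 := by rw [hρ₀def]; ring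
      nlinarith [hmax0]
    nlinarith [h10, h8, pi_pos, hr2]
end
end
end
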